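/- Let T > 0 and let u : [0, T] → ℝ be three times continuously differentiable. For n ≥ 1 set h = T/n and t_i = i·h, and define the local residuals r_i for i = 1, …, n by r_i = (u(t_i) − u(t_{i−1}))/h − u'(t_{i−1}) if i is odd and r_i = (u(t_i) − u(t_{i−1}))/h − u'(t_i) if i is even. Then there exists a constant C (depending only on u and T) such that for all n ≥ 1, h·max_{1≤l≤n} |∑_{i=1}^l r_i| ≤ C·h². That is, the one-step scheme that alternates between the explicit and the implicit Euler step is consistent of order 2 with respect to the 1-Spijker norm. -/

import Mathlib

/-- The Spijker seminorm (without the factor `h`) of the vector `(r 1, …, r n)`: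
`max_{1 ≤ l ≤ n} |∑_{i=1}^{l} r i|`. -/
noncomputable def spijkerSeminorm (n : ℕ) (r : ℕ → ℝ) : ℝ :=
  (((Finset.Icc 1 n).sup fun l => ‖∑ i ∈ Finset.Icc 1 l, r i‖₊ : NNReal) : ℝ)


/-- Pair (trapezoid) estimate: explicit step followed by implicit step has `O(h³)` error. -/
lemma pairEst {s : Set ℝ} {u g g₂ : ℝ → ℝ} {M : ℝ} (hM : 0 ≤ M)
    (Hu : ∀ y ∈ s, HasDerivWithinAt u (g y) s y)
    (Hg : ∀ y ∈ s, HasDerivWithinAt g (g₂ y) s y)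
    (lip : ∀ a ∈ s, ∀ b ∈ s, |g₂ b - g₂ a| ≤ M * |b - a|)
    {c h : ℝ} (hh : 0 ≤ h) (hsub : Set.Icc (c - h) (c + h) ⊆ s) :
    |u (c + h) - u (c - h) - h * (g (c - h) + g (c + h))| ≤ 2 * M * h ^ 3 := by
  set t : Set ℝ := Set.Icc (0 : ℝ) h with ht
  have mem₁ : ∀ x ∈ t, c + x ∈ s := by
    rintro x ⟨hx1, hx2⟩
    exact hsub ⟨by linarith, by linarith⟩
  have mem₂ : ∀ x ∈ t, c - x ∈ s := by
    rintro x ⟨hx1, hx2⟩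
    exact hsub ⟨by linarith, by linarith⟩
  set φ : ℝ → ℝ := fun x => u (c + x) - u (c - x) - x * (g (c + x) + g (c - x)) with hφ
  have hderiv : ∀ x ∈ t, HasDerivWithinAt φ (-(x * (g₂ (c + x) - g₂ (c - x)))) t x := by
    intro x hx
    have hp : HasDerivWithinAt (fun y : ℝ => c + y) 1 t x := (hasDerivWithinAt_id x t).const_add c
    have hq : HasDerivWithinAt (fun y : ℝ => c - y) (-1) t x :=
      (hasDerivWithinAt_id x t).const_sub c
    have h1 : HasDerivWithinAt (fun y => u (c + y)) (g (c + x) * 1) t x :=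
      HasDerivWithinAt.comp x (Hu (c + x) (mem₁ x hx)) hp (fun y hy => mem₁ y hy)
    have h2 : HasDerivWithinAt (fun y => u (c - y)) (g (c - x) * (-1)) t x :=
      HasDerivWithinAt.comp x (Hu (c - x) (mem₂ x hx)) hq (fun y hy => mem₂ y hy)
    have h3 : HasDerivWithinAt (fun y => g (c + y)) (g₂ (c + x) * 1) t x :=
      HasDerivWithinAt.comp x (Hg (c + x) (mem₁ x hx)) hp (fun y hy => mem₁ y hy)
    have h4 : HasDerivWithinAt (fun y => g (c - y)) (g₂ (c - x) * (-1)) t x :=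
      HasDerivWithinAt.comp x (Hg (c - x) (mem₂ x hx)) hq (fun y hy => mem₂ y hy)
    have h5 : HasDerivWithinAt (fun y => y * (g (c + y) + g (c - y)))
        (1 * (g (c + x) + g (c - x)) + x * (g₂ (c + x) * 1 + g₂ (c - x) * (-1))) t x :=
      (hasDerivWithinAt_id x t).mul (h3.add h4)
    have := (h1.sub h2).sub h5
    exact this.congr_deriv (by ring)
  have hbound : ∀ x ∈ t, ‖-(x * (g₂ (c + x) - g₂ (c - x)))‖ ≤ 2 * M * h ^ 2 := by
    rintro x hx
    obtain ⟨hx1, hx2⟩ := hx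
    have hl := lip (c - x) (mem₂ x ⟨hx1, hx2⟩) (c + x) (mem₁ x ⟨hx1, hx2⟩)
    have habs : |c + x - (c - x)| = 2 * x := by
      rw [show c + x - (c - x) = 2 * x by ring, abs_of_nonneg (by linarith)]
    rw [habs] at hl
    rw [Real.norm_eq_abs, abs_neg, abs_mul, abs_of_nonneg hx1]
    have h1 : x * |g₂ (c + x) - g₂ (c - x)| ≤ x * (M * (2 * x)) :=
      mul_le_mul_of_nonneg_left hl hx1
    nlinarith [abs_nonneg (g₂ (c + x) - g₂ (c - x)), mul_nonneg hM (mul_nonneg (sub_nonneg.2 hx2) (by linarith : (0:ℝ) ≤ h + x))]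
  have key := (convex_Icc (0 : ℝ) h).norm_image_sub_le_of_norm_hasDerivWithin_le
    hderiv hbound (Set.left_mem_Icc.2 hh) (Set.right_mem_Icc.2 hh)
  have hφ0 : φ 0 = 0 := by simp [hφ]
  have hφh : φ h = u (c + h) - u (c - h) - h * (g (c + h) + g (c - h)) := rfl
  rw [hφh, hφ0, sub_zero, Real.norm_eq_abs] at key
  calc |u (c + h) - u (c - h) - h * (g (c - h) + g (c + h))|
      = |u (c + h) - u (c - h) - h * (g (c + h) + g (c - h))| := by ring_nf
    _ ≤ 2 * M * h ^ 2 * ‖h - 0‖ := key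
    _ = 2 * M * h ^ 3 := by rw [sub_zero, Real.norm_eq_abs, abs_of_nonneg hh]; ring

/-- Single explicit Euler step estimate: `O(h²)` error. -/
lemma stepEst {s : Set ℝ} {u g : ℝ → ℝ} {M : ℝ} (hM : 0 ≤ M)
    (Hu : ∀ y ∈ s, HasDerivWithinAt u (g y) s y)
    (lip : ∀ a ∈ s, ∀ b ∈ s, |g b - g a| ≤ M * |b - a|)
    {a h : ℝ} (hh : 0 ≤ h) (hsub : Set.Icc a (a + h) ⊆ s) :
    |u (a + h) - u a - h * g a| ≤ M * h ^ 2 := by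
  set t : Set ℝ := Set.Icc (0 : ℝ) h with ht
  have mem₁ : ∀ x ∈ t, a + x ∈ s := by
    rintro x ⟨hx1, hx2⟩
    exact hsub ⟨by linarith, by linarith⟩
  set ψ : ℝ → ℝ := fun x => u (a + x) - x * g a with hψ
  have hderiv : ∀ x ∈ t, HasDerivWithinAt ψ (g (a + x) * 1 - 1 * g a) t x := by
    intro x hx
    have hp : HasDerivWithinAt (fun y : ℝ => a + y) 1 t x := (hasDerivWithinAt_id x t).const_add a
    have h1 : HasDerivWithinAt (fun y => u (a + y)) (g (a + x) * 1) t x :=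
      HasDerivWithinAt.comp x (Hu (a + x) (mem₁ x hx)) hp (fun y hy => mem₁ y hy)
    have h2 : HasDerivWithinAt (fun y : ℝ => y * g a) (1 * g a) t x :=
      (hasDerivWithinAt_id x t).mul_const (g a)
    exact h1.sub h2
  have hbound : ∀ x ∈ t, ‖g (a + x) * 1 - 1 * g a‖ ≤ M * h := by
    rintro x hx
    obtain ⟨hx1, hx2⟩ := hx
    have hl := lip a (hsub ⟨le_rfl, by linarith⟩) (a + x) (mem₁ x ⟨hx1, hx2⟩)
    have habs : |a + x - a| = x := by
      rw [show a + x - a = x by ring, abs_of_nonneg hx1]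
    rw [habs] at hl
    rw [Real.norm_eq_abs, mul_one, one_mul]
    have := abs_nonneg (g (a + x) - g a)
    nlinarith
  have key := (convex_Icc (0 : ℝ) h).norm_image_sub_le_of_norm_hasDerivWithin_le
    hderiv hbound (Set.left_mem_Icc.2 hh) (Set.right_mem_Icc.2 hh)
  have hψ0 : ψ 0 = u a := by simp [hψ]
  have hψh : ψ h = u (a + h) - h * g a := rfl
  rw [hψh, hψ0, Real.norm_eq_abs, sub_zero, Real.norm_eq_abs, abs_of_nonneg hh] at key
  calc |u (a + h) - u a - h * g a| = |u (a + h) - h * g a - u a| := by ring_nf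
    _ ≤ M * h * h := key
    _ = M * h ^ 2 := by ring

/-- The one-step scheme alternating between explicit (odd steps) and implicit (even steps)
Euler steps is consistent of order 2 with respect to the `1`-Spijker norm: for a `C³`
solution `u` on `[0,T]`, with `h = T/n`, `t_i = i·h`, and residuals
`r_i = (u(t_i) - u(t_{i-1}))/h - u'(t_{i-1})` for odd `i`,
`r_i = (u(t_i) - u(t_{i-1}))/h - u'(t_i)` for even `i`, there is a constant `C`
(depending only on `u` and `T`) with `h · max_{1≤l≤n} |∑_{i=1}^l r_i| ≤ C·h²`. -/
theorem alternating_euler_spijker_order_two (T : ℝ) (hT : 0 < T) (u : ℝ → ℝ)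
    (hu : ContDiffOn ℝ 3 u (Set.Icc 0 T)) :
    ∃ C : ℝ, ∀ n : ℕ, 1 ≤ n →
      (T / n) * spijkerSeminorm n (fun i =>
        if Odd i then
          (u ((i : ℝ) * (T / n)) - u (((i : ℝ) - 1) * (T / n))) / (T / n)
            - derivWithin u (Set.Icc 0 T) (((i : ℝ) - 1) * (T / n))
        else
          (u ((i : ℝ) * (T / n)) - u (((i : ℝ) - 1) * (T / n))) / (T / n)
            - derivWithin u (Set.Icc 0 T) ((i : ℝ) * (T / n)))
        ≤ C * (T / n) ^ 2 := by
  have husd : UniqueDiffOn ℝ (Set.Icc (0:ℝ) T) := uniqueDiffOn_Icc hT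
  set s := Set.Icc (0:ℝ) T with hs
  set g := derivWithin u s with hgdef
  have hgc : ContDiffOn ℝ 2 g s := hu.derivWithin husd (by norm_num)
  set g₂ := derivWithin g s with hg2def
  have hg₂c : ContDiffOn ℝ 1 g₂ s := hgc.derivWithin husd (by norm_num)
  have hg₃c : ContinuousOn (derivWithin g₂ s) s := hg₂c.continuousOn_derivWithin husd le_rfl
  obtain ⟨M₂, hM₂⟩ := isCompact_Icc.exists_bound_of_continuousOn hg₂c.continuousOn
  obtain ⟨M₃, hM₃⟩ := isCompact_Icc.exists_bound_of_continuousOn hg₃c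
  have h0s : (0:ℝ) ∈ s := ⟨le_rfl, hT.le⟩
  have hM₂0 : 0 ≤ M₂ := (norm_nonneg _).trans (hM₂ 0 h0s)
  have hM₃0 : 0 ≤ M₃ := (norm_nonneg _).trans (hM₃ 0 h0s)
  have Hu : ∀ y ∈ s, HasDerivWithinAt u (g y) s y := fun y hy =>
    ((hu.differentiableOn (by norm_num)) y hy).hasDerivWithinAt
  have Hg : ∀ y ∈ s, HasDerivWithinAt g (g₂ y) s y := fun y hy =>
    ((hgc.differentiableOn (by norm_num)) y hy).hasDerivWithinAt
  have Hg₂ : ∀ y ∈ s, HasDerivWithinAt g₂ (derivWithin g₂ s y) s y := fun y hy =>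
    ((hg₂c.differentiableOn one_ne_zero) y hy).hasDerivWithinAt
  have hconv : Convex ℝ s := convex_Icc 0 T
  have lipg : ∀ a ∈ s, ∀ b ∈ s, |g b - g a| ≤ M₂ * |b - a| := fun a ha b hb => by
    simpa [Real.norm_eq_abs] using
      Convex.norm_image_sub_le_of_norm_hasDerivWithin_le Hg (fun y hy => hM₂ y hy) hconv ha hb
  have lipg₂ : ∀ a ∈ s, ∀ b ∈ s, |g₂ b - g₂ a| ≤ M₃ * |b - a| := fun a ha b hb => by
    simpa [Real.norm_eq_abs] using
      Convex.norm_image_sub_le_of_norm_hasDerivWithin_le Hg₂ (fun y hy => hM₃ y hy) hconv ha hb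
  refine ⟨M₃ * T + M₂, ?_⟩
  intro n hn
  have hn0 : (0:ℝ) < n := by exact_mod_cast Nat.pos_of_ne_zero (by omega)
  set h := T / (n:ℝ) with hhdef
  have hh0 : 0 < h := div_pos hT hn0
  have hnh : (n:ℝ) * h = T := by rw [hhdef]; field_simp
  set e : ℕ → ℝ := fun i =>
    u ((i:ℝ)*h) - u (((i:ℝ)-1)*h) - h * (if Odd i then g (((i:ℝ)-1)*h) else g ((i:ℝ)*h))
    with hedef
  have hre : ∀ i : ℕ,
      (if Odd i then (u ((i:ℝ) * h) - u (((i:ℝ) - 1) * h)) / h - g (((i:ℝ) - 1) * h)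
       else (u ((i:ℝ) * h) - u (((i:ℝ) - 1) * h)) / h - g ((i:ℝ) * h)) = e i / h := by
    intro i
    by_cases hi : Odd i
    · simp only [hedef, if_pos hi]; field_simp
    · simp only [hedef, if_neg hi]; field_simp
  -- pair estimate
  have pair : ∀ m : ℕ, 2*m + 2 ≤ n → |e (2*m+1) + e (2*m+2)| ≤ 2*M₃*h^3 := by
    intro m hm
    set c : ℝ := (2*(m:ℝ)+1)*h with hcdef
    have hmn : (2*(m:ℝ)+2) ≤ (n:ℝ) := by exact_mod_cast hm
    have hm0 : (0:ℝ) ≤ (m:ℝ) := Nat.cast_nonneg m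
    have hsub : Set.Icc (c-h) (c+h) ⊆ s := by
      intro y hy
      obtain ⟨hy1, hy2⟩ := hy
      have h1 : (0:ℝ) ≤ c - h := by rw [hcdef]; nlinarith
      have h2 : c + h ≤ T := by rw [hcdef]; nlinarith
      exact ⟨by linarith, by linarith⟩
    have key := pairEst hM₃0 Hu Hg lipg₂ hh0.le hsub
    have o1 : Odd (2*m+1) := ⟨m, by ring⟩
    have o2 : ¬ Odd (2*m+2) := by simp [Nat.odd_iff]
    have hsum : e (2*m+1) + e (2*m+2) = u (c+h) - u (c-h) - h*(g (c-h) + g (c+h)) := by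
      simp only [hedef, if_pos o1, if_neg o2, hcdef]
      push_cast
      ring_nf
    rw [hsum]
    exact key
  -- single odd step estimate
  have step : ∀ m : ℕ, 2*m+1 ≤ n → |e (2*m+1)| ≤ M₂ * h^2 := by
    intro m hm
    set a : ℝ := (2*(m:ℝ))*h with hadef
    have hmn : (2*(m:ℝ)+1) ≤ (n:ℝ) := by exact_mod_cast hm
    have hm0 : (0:ℝ) ≤ (m:ℝ) := Nat.cast_nonneg m
    have hsub : Set.Icc a (a+h) ⊆ s := by
      intro y hy
      obtain ⟨hy1, hy2⟩ := hy
      have h1 : (0:ℝ) ≤ a := by rw [hadef]; positivity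
      have h2 : a + h ≤ T := by rw [hadef]; nlinarith
      exact ⟨by linarith, by linarith⟩
    have key := stepEst hM₂0 Hu lipg hh0.le hsub
    have o1 : Odd (2*m+1) := ⟨m, by ring⟩
    have hsum : e (2*m+1) = u (a+h) - u a - h * g a := by
      simp only [hedef, if_pos o1, hadef]
      push_cast
      ring_nf
    rw [hsum]
    exact key
  -- even partial sums
  have even_bd : ∀ m : ℕ, 2*m ≤ n → |∑ i ∈ Finset.Icc 1 (2*m), e i| ≤ 2*M₃*h^3*m := by
    intro m
    induction m with
    | zero => intro _; simp
    | succ k ih =>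
      intro hk
      have hk' : 2*k ≤ n := by omega
      have hs1 : (∑ i ∈ Finset.Icc 1 (2*(k+1)), e i)
          = (∑ i ∈ Finset.Icc 1 (2*k), e i) + (e (2*k+1) + e (2*k+2)) := by
        have h1 : 2*(k+1) = (2*k+1) + 1 := by ring
        rw [h1, Finset.sum_Icc_succ_top (by omega),
          show 2*k+1 = 2*k + 1 from rfl, Finset.sum_Icc_succ_top (by omega)]
        ring
      rw [hs1]
      have hp := pair k (by omega)
      have hih := ih hk'
      calc |(∑ i ∈ Finset.Icc 1 (2*k), e i) + (e (2*k+1) + e (2*k+2))|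
          ≤ |∑ i ∈ Finset.Icc 1 (2*k), e i| + |e (2*k+1) + e (2*k+2)| := abs_add_le _ _
        _ ≤ 2*M₃*h^3*k + 2*M₃*h^3 := add_le_add hih hp
        _ = 2*M₃*h^3*(k+1 : ℕ) := by push_cast; ring
  -- key bound on all partial sums
  have keybd : ∀ l, 1 ≤ l → l ≤ n → |∑ i ∈ Finset.Icc 1 l, e i| ≤ (M₃*T + M₂) * h^2 := by
    intro l hl1 hl2
    have hMT : ∀ m : ℕ, 2*m ≤ n → 2*M₃*h^3*m ≤ M₃*T*h^2 := by
      intro m hm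
      have hmn : (2*(m:ℝ)) ≤ (n:ℝ) := by exact_mod_cast hm
      have t1 : 2*(m:ℝ)*h ≤ T := by
        rw [← hnh]; exact mul_le_mul_of_nonneg_right hmn hh0.le
      have t2 : (0:ℝ) ≤ M₃ * h^2 := by positivity
      nlinarith [t1, t2]
    rcases Nat.even_or_odd l with ⟨m, hm⟩ | ⟨m, hm⟩
    · subst hm
      rw [show m + m = 2*m from by ring]
      have h1 := even_bd m (by omega)
      have h2 := hMT m (by omega)
      nlinarith [hh0.le, hM₂0, sq_nonneg h]
    · subst hm
      have hs1 : (∑ i ∈ Finset.Icc 1 (2*m+1), e i)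
          = (∑ i ∈ Finset.Icc 1 (2*m), e i) + e (2*m+1) := by
        rw [Finset.sum_Icc_succ_top (by omega)]
      rw [hs1]
      have h1 := even_bd m (by omega)
      have h2 := hMT m (by omega)
      have h3 := step m (by omega)
      calc |(∑ i ∈ Finset.Icc 1 (2*m), e i) + e (2*m+1)|
          ≤ |∑ i ∈ Finset.Icc 1 (2*m), e i| + |e (2*m+1)| := abs_add_le _ _
        _ ≤ (M₃*T + M₂) * h^2 := by nlinarith
  -- conclude
  simp only [hre]
  have hCh : 0 ≤ (M₃*T + M₂)*h := by positivity
  have hsp : spijkerSeminorm n (fun i => e i / h) ≤ (M₃*T + M₂)*h := by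
    unfold spijkerSeminorm
    rw [← Real.coe_toNNReal ((M₃*T + M₂)*h) hCh]
    refine NNReal.coe_le_coe.2 (Finset.sup_le ?_)
    intro l hl
    obtain ⟨hl1, hl2⟩ := Finset.mem_Icc.1 hl
    have habs : |∑ i ∈ Finset.Icc 1 l, e i / h| ≤ (M₃*T + M₂)*h := by
      rw [← Finset.sum_div, abs_div, abs_of_pos hh0, div_le_iff₀ hh0]
      calc |∑ i ∈ Finset.Icc 1 l, e i| ≤ (M₃*T + M₂) * h^2 := keybd l hl1 hl2
        _ = (M₃*T + M₂)*h*h := by ring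
    have hnn : ‖∑ i ∈ Finset.Icc 1 l, e i / h‖₊
        = Real.toNNReal |∑ i ∈ Finset.Icc 1 l, e i / h| := by
      rw [Real.toNNReal_eq_nnnorm_of_nonneg (abs_nonneg _), Real.nnnorm_abs]
    rw [hnn]
    exact Real.toNNReal_mono habs
  calc h * spijkerSeminorm n (fun i => e i / h) ≤ h * ((M₃*T + M₂)*h) :=
      mul_le_mul_of_nonneg_left hsp hh0.le
    _ = (M₃*T + M₂) * h^2 := by ring
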